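/- With b as in the Merton-style bond formula, for each fixed t ∈ [0,T), lim_{v→0⁺} b(t,v)/v = e^{α(T-t)}, and consequently sup_{v>0} b(t,v)/v = e^{α(T-t)}; in particular b(t,v)/v is bounded on [0,T) × (0,∞) by e^{|α|T}. -/

import Mathlib

open Real

/-- Standard normal CDF. -/
noncomputable def stdNormalCDF (x : ℝ) : ℝ :=
  ∫ z in Set.Iic x, (Real.sqrt (2 * Real.pi))⁻¹ * Real.exp (-z ^ 2 / 2)

noncomputable def d₁ (α σ₁ D T t v : ℝ) : ℝ :=
  (Real.log (D / v) - σ₁ ^ 2 * (1 / 2 + α / σ₁ ^ 2) * (T - t)) / (σ₁ * Real.sqrt (T - t))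

noncomputable def d₂ (α σ₁ D T t v : ℝ) : ℝ :=
  d₁ α σ₁ D T t v + σ₁ * Real.sqrt (T - t)

/-- The Merton-style bond price function `b`. -/
noncomputable def bfun (α σ₁ D T t v : ℝ) : ℝ :=
  v * Real.exp (α * (T - t)) * stdNormalCDF (d₁ α σ₁ D T t v)
    + D * (1 - stdNormalCDF (d₂ α σ₁ D T t v))

open Filter

/-!
Completing the square in the Gaussian exponent gives `D φ(d₂) = v e^{α(T-t)} φ(d₁)`, and since
Mills' ratio `(1 - N(x)) / φ(x)` is decreasing and `d₁ ≤ d₂`, the second term of `b` satisfies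
`D (1 - N(d₂)) ≤ v e^{α(T-t)} (1 - N(d₁))`. Hence `b(t,v)/v` lies between `e^{α(T-t)} N(d₁)` and
`e^{α(T-t)}`, and as `v → 0⁺` we have `d₁ → ∞`, so both bounds tend to `e^{α(T-t)}`. A bound that is
approached is the supremum, and `α(T-t) ≤ |α| T` for `0 ≤ t < T`.
-/

open MeasureTheory ProbabilityTheory Set Topology

local notation "φ" => gaussianPDFReal 0 1

lemma stdNormalCDF_eq_setIntegral_Iic (x : ℝ) : stdNormalCDF x = ∫ z in Iic x, φ z := by
  simp [stdNormalCDF, gaussianPDFReal]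

lemma one_sub_stdNormalCDF (x : ℝ) : 1 - stdNormalCDF x = ∫ z in Ioi x, φ z := by
  have h := intervalIntegral.integral_Iic_add_Ioi (b := x)
    (integrable_gaussianPDFReal 0 1).integrableOn (integrable_gaussianPDFReal 0 1).integrableOn
  rw [integral_gaussianPDFReal_eq_one 0 one_ne_zero] at h
  rw [stdNormalCDF_eq_setIntegral_Iic]
  linarith

lemma stdNormalCDF_le_one (x : ℝ) : stdNormalCDF x ≤ 1 := by
  have : 0 ≤ ∫ z in Ioi x, φ z :=
    setIntegral_nonneg measurableSet_Ioi fun z _ => gaussianPDFReal_nonneg 0 1 z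
  linarith [one_sub_stdNormalCDF x]

lemma tendsto_stdNormalCDF_atTop : Tendsto stdNormalCDF atTop (𝓝 1) := by
  have h := (aecover_Iic (μ := volume) tendsto_id).integral_tendsto_of_countably_generated
    (integrable_gaussianPDFReal 0 1)
  rw [integral_gaussianPDFReal_eq_one 0 one_ne_zero] at h
  exact h.congr fun x => (stdNormalCDF_eq_setIntegral_Iic x).symm

lemma setIntegral_Ioi_comp_add_right {E : Type*} [NormedAddCommGroup E] [NormedSpace ℝ E]
    (f : ℝ → E) (a c : ℝ) : ∫ z in Ioi a, f (z + c) = ∫ z in Ioi (a + c), f z := by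
  have h := (measurePreserving_add_right volume c).setIntegral_preimage_emb
    (measurableEmbedding_addRight c) f (Ioi (a + c))
  rwa [preimage_add_const_Ioi, add_sub_cancel_right] at h

lemma gaussianPDFReal_mul_comp_add_le {a c z : ℝ} (hc : 0 ≤ c) (hz : a ≤ z) :
    φ a * φ (z + c) ≤ φ (a + c) * φ z := by
  simp only [gaussianPDFReal, mul_mul_mul_comm _ (rexp _), ← exp_add]
  refine mul_le_mul_of_nonneg_left (exp_le_exp.2 ?_) (by positivity)
  push_cast
  nlinarith [mul_nonneg hc (sub_nonneg.2 hz)]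

/-- Monotonicity of Mills' ratio `(1 - Φ x) / φ x`, in product form. -/
lemma gaussianPDFReal_mul_one_sub_stdNormalCDF_le {a b : ℝ} (hab : a ≤ b) :
    φ a * (1 - stdNormalCDF b) ≤ φ b * (1 - stdNormalCDF a) := by
  obtain ⟨c, hc, rfl⟩ : ∃ c, 0 ≤ c ∧ b = a + c := ⟨b - a, by linarith, by ring⟩
  rw [one_sub_stdNormalCDF, one_sub_stdNormalCDF, ← setIntegral_Ioi_comp_add_right,
    ← integral_const_mul, ← integral_const_mul]
  exact setIntegral_mono_on
    (((integrable_gaussianPDFReal 0 1).comp_add_right c).const_mul _).integrableOn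
    ((integrable_gaussianPDFReal 0 1).const_mul _).integrableOn measurableSet_Ioi
    fun z hz => gaussianPDFReal_mul_comp_add_le hc (le_of_lt hz)

lemma isLUB_image_of_tendsto {ι β : Type*} [TopologicalSpace β] [Preorder β] [ClosedIicTopology β]
    {f : ι → β} {s : Set ι} {l : Filter ι} [l.NeBot] {b : β} (hs : s ∈ l)
    (hle : ∀ x ∈ s, f x ≤ b) (hf : Tendsto f l (𝓝 b)) : IsLUB (f '' s) b :=
  ⟨forall_mem_image.2 hle, fun _ hc =>
    le_of_tendsto hf (mem_of_superset hs fun _ hx => hc (mem_image_of_mem f hx))⟩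

section Merton

variable {α σ₁ D T t v : ℝ}

lemma d₁_le_d₂ (hσ₁ : 0 ≤ σ₁) : d₁ α σ₁ D T t v ≤ d₂ α σ₁ D T t v :=
  le_add_of_nonneg_right (by positivity)

lemma sq_d₂_sub_sq_d₁ (hσ₁ : σ₁ ≠ 0) (ht : t < T) :
    d₂ α σ₁ D T t v ^ 2 / 2 - d₁ α σ₁ D T t v ^ 2 / 2 = log (D / v) - α * (T - t) := by
  have hτ : 0 < T - t := sub_pos.2 ht
  have hs : σ₁ * √(T - t) ≠ 0 := mul_ne_zero hσ₁ (sqrt_pos.2 hτ).ne'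
  have hd₁ : d₁ α σ₁ D T t v * (σ₁ * √(T - t)) =
      log (D / v) - (σ₁ ^ 2 / 2 + α) * (T - t) := by
    rw [d₁, div_mul_cancel₀ _ hs]
    field_simp
  have hs2 : (σ₁ * √(T - t)) ^ 2 = σ₁ ^ 2 * (T - t) := by rw [mul_pow, sq_sqrt hτ.le]
  rw [d₂]
  linear_combination hd₁ + hs2 / 2

lemma mul_gaussianPDFReal_d₂ (hσ₁ : σ₁ ≠ 0) (hD : 0 < D) (ht : t < T) (hv : 0 < v) :
    D * φ (d₂ α σ₁ D T t v) = v * exp (α * (T - t)) * φ (d₁ α σ₁ D T t v) := by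
  have h := sq_d₂_sub_sq_d₁ (α := α) (D := D) (v := v) hσ₁ ht
  simp only [gaussianPDFReal, NNReal.coe_one, sub_zero, mul_one]
  rw [show -d₂ α σ₁ D T t v ^ 2 / 2 = -d₁ α σ₁ D T t v ^ 2 / 2 - (log (D / v) - α * (T - t)) by
    linarith, exp_sub, exp_sub, exp_log (by positivity)]
  field_simp

lemma tendsto_d₁_nhdsGT_zero (hσ₁ : 0 < σ₁) (hD : 0 < D) (ht : t < T) :
    Tendsto (d₁ α σ₁ D T t) (𝓝[>] 0) atTop := by
  have hlog : Tendsto (fun v => log (D / v)) (𝓝[>] 0) atTop :=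
    tendsto_log_atTop.comp (tendsto_inv_nhdsGT_zero.const_mul_atTop hD)
  exact (tendsto_atTop_add_const_right _ _ hlog).atTop_div_const
    (mul_pos hσ₁ (sqrt_pos.2 (sub_pos.2 ht)))

lemma bfun_div_eq (hv : v ≠ 0) :
    bfun α σ₁ D T t v / v = exp (α * (T - t)) * stdNormalCDF (d₁ α σ₁ D T t v)
      + D * (1 - stdNormalCDF (d₂ α σ₁ D T t v)) / v := by
  rw [bfun, add_div, mul_assoc, mul_div_cancel_left₀ _ hv]

lemma mul_one_sub_stdNormalCDF_d₂_div_le (hσ₁ : 0 < σ₁) (hD : 0 < D) (ht : t < T) (hv : 0 < v) :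
    D * (1 - stdNormalCDF (d₂ α σ₁ D T t v)) / v
      ≤ exp (α * (T - t)) * (1 - stdNormalCDF (d₁ α σ₁ D T t v)) := by
  have hpdf := mul_gaussianPDFReal_d₂ (α := α) hσ₁.ne' hD ht hv
  set x₁ := d₁ α σ₁ D T t v
  set x₂ := d₂ α σ₁ D T t v
  rw [div_le_iff₀ hv, ← mul_le_mul_iff_left₀ (gaussianPDFReal_pos 0 1 x₂ one_ne_zero)]
  calc D * (1 - stdNormalCDF x₂) * φ x₂
      = v * exp (α * (T - t)) * (φ x₁ * (1 - stdNormalCDF x₂)) := by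
        linear_combination (1 - stdNormalCDF x₂) * hpdf
    _ ≤ v * exp (α * (T - t)) * (φ x₂ * (1 - stdNormalCDF x₁)) := by
        have := gaussianPDFReal_mul_one_sub_stdNormalCDF_le (d₁_le_d₂ hσ₁.le : x₁ ≤ x₂)
        gcongr
    _ = exp (α * (T - t)) * (1 - stdNormalCDF x₁) * v * φ x₂ := by ring

lemma bfun_div_le_exp (hσ₁ : 0 < σ₁) (hD : 0 < D) (ht : t < T) (hv : 0 < v) :
    bfun α σ₁ D T t v / v ≤ exp (α * (T - t)) := by
  rw [bfun_div_eq hv.ne']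
  linarith [mul_one_sub_stdNormalCDF_d₂_div_le (α := α) hσ₁ hD ht hv]

lemma tendsto_bfun_div (hσ₁ : 0 < σ₁) (hD : 0 < D) (ht : t < T) :
    Tendsto (fun v => bfun α σ₁ D T t v / v) (𝓝[>] 0) (𝓝 (exp (α * (T - t)))) := by
  have hΦ₁ := tendsto_stdNormalCDF_atTop.comp (tendsto_d₁_nhdsGT_zero (α := α) hσ₁ hD ht)
  have hupper : Tendsto (fun v => exp (α * (T - t)) * (1 - stdNormalCDF (d₁ α σ₁ D T t v)))
      (𝓝[>] 0) (𝓝 0) := by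
    simpa using ((tendsto_const_nhds (x := (1 : ℝ))).sub hΦ₁).const_mul (exp (α * (T - t)))
  have htail : Tendsto (fun v => D * (1 - stdNormalCDF (d₂ α σ₁ D T t v)) / v) (𝓝[>] 0) (𝓝 0) := by
    refine tendsto_of_tendsto_of_tendsto_of_le_of_le' tendsto_const_nhds hupper ?_ ?_
    · filter_upwards [self_mem_nhdsWithin] with v hv
      exact div_nonneg (mul_nonneg hD.le (sub_nonneg.2 (stdNormalCDF_le_one _))) hv.le
    · filter_upwards [self_mem_nhdsWithin] with v hv
      exact mul_one_sub_stdNormalCDF_d₂_div_le hσ₁ hD ht hv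
  have hsum := (hΦ₁.const_mul (exp (α * (T - t)))).add htail
  rw [mul_one, add_zero] at hsum
  exact hsum.congr' (eventually_mem_nhdsWithin.mono fun v hv => (bfun_div_eq hv.ne').symm)

end Merton

theorem b_over_v_limit_and_bound_general (μ₁ μ₂ ρ σ₁ σ₂ D T : ℝ)
    (hσ₁ : 0 < σ₁) (hD : 0 < D) :
    (∀ t : ℝ, 0 ≤ t → t < T →
      Tendsto (fun v => bfun (μ₁ - ρ * μ₂ * σ₁ / σ₂) σ₁ D T t v / v)
        (nhdsWithin 0 (Set.Ioi 0))
        (nhds (Real.exp ((μ₁ - ρ * μ₂ * σ₁ / σ₂) * (T - t))))) ∧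
    (∀ t : ℝ, 0 ≤ t → t < T →
      IsLUB ((fun v => bfun (μ₁ - ρ * μ₂ * σ₁ / σ₂) σ₁ D T t v / v) '' Set.Ioi 0)
        (Real.exp ((μ₁ - ρ * μ₂ * σ₁ / σ₂) * (T - t)))) ∧
    (∀ t v : ℝ, 0 ≤ t → t < T → 0 < v →
      bfun (μ₁ - ρ * μ₂ * σ₁ / σ₂) σ₁ D T t v / v ≤
        Real.exp (|μ₁ - ρ * μ₂ * σ₁ / σ₂| * T)) := by
  set α := μ₁ - ρ * μ₂ * σ₁ / σ₂
  refine ⟨fun t _ ht => tendsto_bfun_div hσ₁ hD ht, fun t _ ht => ?_, fun t v ht₀ ht hv => ?_⟩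
  · exact isLUB_image_of_tendsto self_mem_nhdsWithin (fun v hv => bfun_div_le_exp hσ₁ hD ht hv)
      (tendsto_bfun_div hσ₁ hD ht)
  · refine (bfun_div_le_exp hσ₁ hD ht hv).trans (exp_le_exp.2 ?_)
    calc α * (T - t) ≤ |α| * (T - t) := mul_le_mul_of_nonneg_right (le_abs_self α) (by linarith)
      _ ≤ |α| * T := by gcongr; linarith

theorem b_over_v_limit_and_bound (μ₁ μ₂ ρ σ₁ σ₂ D T : ℝ)
    (hσ₁ : 0 < σ₁) (hσ₂ : 0 < σ₂) (hD : 0 < D) (hT : 0 < T) :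
    (∀ t : ℝ, 0 ≤ t → t < T →
      Tendsto (fun v => bfun (μ₁ - ρ * μ₂ * σ₁ / σ₂) σ₁ D T t v / v)
        (nhdsWithin 0 (Set.Ioi 0))
        (nhds (Real.exp ((μ₁ - ρ * μ₂ * σ₁ / σ₂) * (T - t))))) ∧
    (∀ t : ℝ, 0 ≤ t → t < T →
      IsLUB ((fun v => bfun (μ₁ - ρ * μ₂ * σ₁ / σ₂) σ₁ D T t v / v) '' Set.Ioi 0)
        (Real.exp ((μ₁ - ρ * μ₂ * σ₁ / σ₂) * (T - t)))) ∧
    (∀ t v : ℝ, 0 ≤ t → t < T → 0 < v →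
      bfun (μ₁ - ρ * μ₂ * σ₁ / σ₂) σ₁ D T t v / v ≤
        Real.exp (|μ₁ - ρ * μ₂ * σ₁ / σ₂| * T)) :=
  b_over_v_limit_and_bound_general μ₁ μ₂ ρ σ₁ σ₂ D T hσ₁ hD
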